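/- For every k ∈ ℕ, every n ≥ 1, all m_1,…,m_n ∈ ℚ and every permutation σ of {1,…,n}: p_k(m_{σ(1)},…,m_{σ(n)}) = p_k(m_1,…,m_n) and q_k(m_{σ(1)},…,m_{σ(n)}) = q_k(m_1,…,m_n), i.e. the multivariate polynomials p_k and q_k are symmetric in their variables. Moreover they satisfy the consistency relations p_k(m_1,…,m_n,0) = p_k(m_1,…,m_n) and q_k(m_1,…,m_n,0) = q_k(m_1,…,m_n). -/

import Mathlib

/-- Generalized binomial coefficient `binom(x,k) = x(x-1)⋯(x-k+1)/k!`. -/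
def qbinom (x : ℚ) (k : ℕ) : ℚ := (∏ i ∈ Finset.range k, (x - i)) / (Nat.factorial k)

/-- `p_k(m) = binom(m-1,k)·binom(m+k,k)`. -/
def pPoly (k : ℕ) (m : ℚ) : ℚ := qbinom (m - 1) k * qbinom (m + k) k

/-- `q_k(m) = binom(m,k)·binom(m+k-1,k)`. -/
def qPoly (k : ℕ) (m : ℚ) : ℚ := qbinom m k * qbinom (m + k - 1) k

/-- Multivariate `p_k(m_1,…,m_n) = Σ_{k_1+⋯+k_n=k} p_{k_1}(m_1)·q_{k_2}(m_2)⋯q_{k_n}(m_n)`. -/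
def pMulti (k n : ℕ) (m : Fin n → ℚ) : ℚ :=
  ∑ f ∈ Finset.Nat.antidiagonalTuple n k,
    ∏ i : Fin n, (if i.val = 0 then pPoly (f i) (m i) else qPoly (f i) (m i))

/-- Multivariate `q_k(m_1,…,m_n) = Σ_{k_1+⋯+k_n=k} q_{k_1}(m_1)⋯q_{k_n}(m_n)`. -/
def qMulti (k n : ℕ) (m : Fin n → ℚ) : ℚ :=
  ∑ f ∈ Finset.Nat.antidiagonalTuple n k, ∏ i : Fin n, qPoly (f i) (m i)

/-! The one-variable identity `p_{k+1}(m) + p_k(m) = q_{k+1}(m)` says that the generating series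
`P(m) = ∑ p_k(m) X^k` and `Q(m) = ∑ q_k(m) X^k` satisfy `(1 + X) P(m) = Q(m)`. Hence
`q_k(m_1,…,m_n)` is the coefficient of `X^k` in `∏ Q(m_i)` and `p_k(m_1,…,m_n)` that of
`(1 + X)⁻¹ ∏ Q(m_i)`, both visibly symmetric. Since `q_k(0) = 0` for `k > 0`, `Q(0) = 1`, so a
further variable equal to `0` changes neither. -/

open PowerSeries Finset

theorem qbinom_zero (x : ℚ) : qbinom x 0 = 1 := by simp [qbinom]

theorem qbinom_succ (x : ℚ) (k : ℕ) : qbinom x (k + 1) = qbinom x k * (x - k) / (k + 1) := by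
  simp only [qbinom, prod_range_succ, Nat.factorial_succ]
  push_cast
  field_simp

theorem qbinom_add_one_succ (x : ℚ) (k : ℕ) :
    qbinom (x + 1) (k + 1) = (x + 1) * qbinom x k / (k + 1) := by
  simp only [qbinom, prod_range_succ', Nat.factorial_succ]
  push_cast
  field_simp
  simp only [add_sub_add_right_eq_sub, sub_zero]
  ring

theorem pPoly_zero (m : ℚ) : pPoly 0 m = 1 := by simp [pPoly, qbinom_zero]

theorem qPoly_zero (m : ℚ) : qPoly 0 m = 1 := by simp [qPoly, qbinom_zero]

theorem pPoly_succ (k : ℕ) (m : ℚ) :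
    pPoly (k + 1) m = pPoly k m * (m ^ 2 - (k + 1) ^ 2) / (k + 1) ^ 2 := by
  rw [pPoly, pPoly, Nat.cast_succ, ← add_assoc, qbinom_succ, qbinom_add_one_succ]
  field_simp
  ring

theorem qPoly_succ (k : ℕ) (m : ℚ) :
    qPoly (k + 1) m = pPoly k m * m ^ 2 / (k + 1) ^ 2 := by
  have h := qbinom_add_one_succ (m - 1) k
  rw [sub_add_cancel] at h
  rw [qPoly, pPoly, h, Nat.cast_succ, ← add_assoc, add_sub_cancel_right, qbinom_succ]
  field_simp
  ring

theorem pPoly_succ_add_pPoly (k : ℕ) (m : ℚ) :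
    pPoly (k + 1) m + pPoly k m = qPoly (k + 1) m := by
  rw [pPoly_succ, qPoly_succ]
  field_simp
  ring

theorem qPoly_succ_zero (k : ℕ) : qPoly (k + 1) 0 = 0 := by simp [qPoly_succ]

theorem PowerSeries.coeff_prod_eq_sum_antidiagonalTuple {R : Type*} [CommSemiring R] {n : ℕ}
    (f : Fin n → R⟦X⟧) (d : ℕ) :
    coeff d (∏ i, f i) = ∑ l ∈ Nat.antidiagonalTuple n d, ∏ i, coeff (l i) (f i) := by
  rw [coeff_prod, ← piAntidiag_univ_fin_eq_antidiagonalTuple, finsuppAntidiag, sum_map,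
    ← sum_attach (piAntidiag univ d)]
  rfl

def pSeries (x : ℚ) : ℚ⟦X⟧ := mk fun j => pPoly j x

def qSeries (x : ℚ) : ℚ⟦X⟧ := mk fun j => qPoly j x

theorem one_add_X_mul_pSeries (x : ℚ) : (1 + X) * pSeries x = qSeries x := by
  ext (_ | j)
  · simp [pSeries, qSeries, pPoly_zero, qPoly_zero]
  · simp only [pSeries, qSeries, add_mul, one_mul, map_add, coeff_succ_X_mul, coeff_mk]
    exact pPoly_succ_add_pPoly j x

theorem qSeries_zero : qSeries 0 = 1 := by
  ext (_ | j) <;> simp [qSeries, qPoly_zero, qPoly_succ_zero, coeff_one]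

theorem qMulti_eq_coeff (k n : ℕ) (m : Fin n → ℚ) :
    qMulti k n m = coeff k (∏ i, qSeries (m i)) := by
  simp [qMulti, coeff_prod_eq_sum_antidiagonalTuple, qSeries]

theorem pMulti_eq_coeff (k n : ℕ) (m : Fin n → ℚ) :
    pMulti k n m = coeff k (∏ i, if i.val = 0 then pSeries (m i) else qSeries (m i)) := by
  simp [pMulti, coeff_prod_eq_sum_antidiagonalTuple, apply_ite, pSeries, qSeries]

theorem pMulti_eq_coeff_inv_mul (k n : ℕ) (m : Fin (n + 1) → ℚ) :
    pMulti k (n + 1) m = coeff k ((1 + X)⁻¹ * ∏ i, qSeries (m i)) := by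
  rw [pMulti_eq_coeff, Fin.prod_univ_succ, Fin.prod_univ_succ, ← one_add_X_mul_pSeries,
    mul_assoc, ← mul_assoc, PowerSeries.inv_mul_cancel _ (by simp), one_mul]
  simp

theorem prod_qSeries_comp_perm {n : ℕ} (m : Fin n → ℚ) (σ : Equiv.Perm (Fin n)) :
    ∏ i, qSeries ((m ∘ σ) i) = ∏ i, qSeries (m i) :=
  Equiv.prod_comp σ fun i => qSeries (m i)

theorem prod_qSeries_snoc_zero {n : ℕ} (m : Fin n → ℚ) :
    ∏ i, qSeries ((Fin.snoc m 0 : Fin (n + 1) → ℚ) i) = ∏ i, qSeries (m i) := by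
  simp [Fin.prod_univ_castSucc, qSeries_zero]

/-- Symmetry of the multivariate polynomials `p_k` and `q_k` under permutations of their
variables, together with the consistency relations obtained by appending the value `0`. -/
theorem stmt2 (k n : ℕ) (hn : 1 ≤ n) (m : Fin n → ℚ) :
    (∀ σ : Equiv.Perm (Fin n),
      pMulti k n (m ∘ σ) = pMulti k n m ∧ qMulti k n (m ∘ σ) = qMulti k n m) ∧
    pMulti k (n + 1) (Fin.snoc m 0) = pMulti k n m ∧
    qMulti k (n + 1) (Fin.snoc m 0) = qMulti k n m := by
  obtain ⟨n, rfl⟩ := Nat.exists_eq_add_of_le' hn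
  simp only [pMulti_eq_coeff_inv_mul, qMulti_eq_coeff, prod_qSeries_comp_perm,
    prod_qSeries_snoc_zero, and_self, implies_true]
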